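/- If P has full rank, then u ≠ 0, where uᵀ = e₁ᵀ adj(I − A). -/
import Mathlib


open Matrix

theorem stmt7 (n : ℕ) (hn : 2 ≤ n) (A : Matrix (Fin n) (Fin n) ℝ)
    (hP : LinearIndependent ℝ
      (fun j : Fin (n - 1) => fun i : Fin n => (1 - A) i ⟨j.1 + 1, by have := j.2; omega⟩)) :
    vecMul (Pi.single ⟨0, by omega⟩ 1) (adjugate (1 - A)) ≠ 0 := by
  set B : Matrix (Fin n) (Fin n) ℝ := 1 - A with hB
  set f : Fin (n - 1) → Fin n → ℝ :=
    fun j => fun i => B i ⟨j.1 + 1, by have := j.2; omega⟩ with hf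
  -- find i₀ with e_{i₀} not in span of the columns
  have hne : ∃ i₀ : Fin n, (Pi.single i₀ 1 : Fin n → ℝ) ∉ Submodule.span ℝ (Set.range f) := by
    by_contra h
    push_neg at h
    have htop : Submodule.span ℝ (Set.range f) = ⊤ := by
      rw [eq_top_iff]
      intro x _
      have hx : x = ∑ i : Fin n, x i • (Pi.single i 1 : Fin n → ℝ) := by
        ext j
        simp [Pi.single_apply, Finset.sum_apply, mul_comm]
      rw [hx]
      exact Submodule.sum_mem _ fun i _ => Submodule.smul_mem _ _ (h i)
    have h1 : Module.finrank ℝ (Fin n → ℝ) ≤ Fintype.card (Fin (n - 1)) :=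
      finrank_le_of_span_eq_top htop
    simp only [Module.finrank_pi, Fintype.card_fin] at h1
    omega
  obtain ⟨i₀, hi₀⟩ := hne
  -- extended family is linearly independent
  have hcons : LinearIndependent ℝ (Fin.cons (Pi.single i₀ 1 : Fin n → ℝ) f) :=
    linearIndependent_fin_cons.2 ⟨hP, hi₀⟩
  set z : Fin n := ⟨0, by omega⟩ with hz
  set C : Matrix (Fin n) (Fin n) ℝ := B.updateCol z (Pi.single i₀ 1) with hC
  have hcast : n - 1 + 1 = n := by omega
  have hrows : LinearIndependent ℝ (fun k => Cᵀ k) := by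
    have heq : (fun k => Cᵀ k) =
        (Fin.cons (Pi.single i₀ 1 : Fin n → ℝ) f) ∘ (Fin.cast hcast.symm) := by
      funext k
      ext i
      rcases k with ⟨kv, hk⟩
      simp only [Function.comp_apply, transpose_apply, hC, updateCol_apply]
      rcases kv with _ | kv
      · have : (⟨0, hk⟩ : Fin n) = z := rfl
        rw [if_pos this]
        have : Fin.cast hcast.symm (⟨0, hk⟩ : Fin n) = (0 : Fin (n - 1 + 1)) := rfl
        rw [this, Fin.cons_zero]
      · have hne' : (⟨kv + 1, hk⟩ : Fin n) ≠ z := by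
          simp [hz, Fin.ext_iff]
        rw [if_neg hne']
        have : Fin.cast hcast.symm (⟨kv + 1, hk⟩ : Fin n) =
            Fin.succ ⟨kv, by omega⟩ := rfl
        rw [this, Fin.cons_succ]
    rw [heq]
    exact hcons.comp _ (Fin.cast_injective _)
  have hCunit : IsUnit C := by
    have := (linearIndependent_rows_iff_isUnit (A := Cᵀ)).1 hrows
    rwa [isUnit_transpose] at this
  have hdet : C.det ≠ 0 :=
    ((Matrix.isUnit_iff_isUnit_det C).1 hCunit).ne_zero
  have hadj : adjugate B z i₀ = C.det := by
    have h1 : adjugate B z i₀ = adjugate Bᵀ i₀ z := by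
      rw [← adjugate_transpose, transpose_apply]
    rw [h1, adjugate_apply, updateRow_transpose, det_transpose]
  intro hcontra
  have : adjugate B z i₀ = 0 := by
    have := congrFun hcontra i₀
    rwa [single_one_vecMul] at this
  rw [hadj] at this
  exact hdet this
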